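/- arXiv:0904.3592 — 2 statements merged into one kernel-verified Lean document; each statement's English description precedes it below -/
import Mathlib

section
/- Assume the GO condition holds. Let p_1, p_2 ⊆ m be subspaces with [h, p_1] ⊆ p_1, [h, p_2] ⊆ p_2, ⟨p_1, p_2⟩ = 0 and ⟨[X, Y], v⟩ = 0 for all X ∈ p_1, Y ∈ p_2, v ∈ p_1 + p_2 (the brackets [p_1, p_2] are orthogonal to p_1 + p_2). If p_1 ⊆ ker(A − λ·id), p_2 ⊆ ker(A − μ·id) and [p_1, p_2] ≠ 0, then λ = μ; equivalently, if λ ≠ μ then [p_1, p_2] = 0. -/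
/-!
Apply the GO condition to `X + Y` with `X ∈ p₁`, `Y ∈ p₂`: for some `H ∈ h` the vector
`W = [H + X + Y, λX + μY] = λ[H,X] + μ[H,Y] + (μ - λ)[X,Y]` lies in `h`. By invariance
`⟨[X,Y], W⟩ = ⟨X, [Y,W]⟩`, which vanishes because `[Y,W] ∈ p₂ ⊥ p₁`. Since `[H,X] + [H,Y] ∈ p₁ + p₂`
is orthogonal to `[X,Y]`, this leaves `(μ - λ)‖[X,Y]‖² = 0`.
-/

theorem LinearMap.apply_lie_left_eq_of_invariant {R L : Type*} [CommRing R] [LieRing L]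
    [LieAlgebra R L] {B : L →ₗ[R] L →ₗ[R] R} (hB : ∀ Z X Y : L, B ⁅Z, X⁆ Y + B X ⁅Z, Y⁆ = 0)
    (X Y W : L) : B ⁅X, Y⁆ W = B X ⁅Y, W⁆ := by
  have h := hB Y X W
  rw [← lie_skew, map_neg, LinearMap.neg_apply] at h
  linear_combination -h

theorem lie_add_add_smul_add_smul {R L : Type*} [CommRing R] [LieRing L] [LieAlgebra R L]
    (H X Y : L) (a b : R) :
    ⁅H + (X + Y), a • X + b • Y⁆ = a • ⁅H, X⁆ + b • ⁅H, Y⁆ + (b - a) • ⁅X, Y⁆ := by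
  simp only [lie_add, add_lie, lie_smul, lie_self, ← lie_skew Y X]
  module

theorem stmt_13_general
    {g : Type*} [LieRing g] [LieAlgebra ℝ g]
    (B : g →ₗ[ℝ] g →ₗ[ℝ] ℝ)
    (hBpos : ∀ X : g, X ≠ 0 → 0 < B X X)
    (hBinv : ∀ Z X Y : g, B ⁅Z, X⁆ Y + B X ⁅Z, Y⁆ = 0)
    (h : LieSubalgebra ℝ g)
    (m : Submodule ℝ g)
    (A : g →ₗ[ℝ] g)
    (hGO : ∀ X ∈ m, ∃ H ∈ h, ⁅H + X, A X⁆ ∈ h)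
    (lam mu : ℝ)
    (p1 p2 : Submodule ℝ g) (hp1m : p1 ≤ m) (hp2m : p2 ≤ m)
    (hp1h : ∀ H ∈ h, ∀ X ∈ p1, ⁅H, X⁆ ∈ p1)
    (hp2h : ∀ H ∈ h, ∀ Y ∈ p2, ⁅H, Y⁆ ∈ p2)
    (horth : ∀ X ∈ p1, ∀ Y ∈ p2, B X Y = 0)
    (hbr : ∀ X ∈ p1, ∀ Y ∈ p2, ∀ v ∈ p1 ⊔ p2, B ⁅X, Y⁆ v = 0)
    (hp1e : ∀ X ∈ p1, A X = lam • X)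
    (hp2e : ∀ Y ∈ p2, A Y = mu • Y)
    (hne0 : ∃ X ∈ p1, ∃ Y ∈ p2, ⁅X, Y⁆ ≠ 0) :
    lam = mu := by
  obtain ⟨X, hX, Y, hY, hXY⟩ := hne0
  obtain ⟨H, hH, hW⟩ := hGO (X + Y) (m.add_mem (hp1m hX) (hp2m hY))
  rw [map_add, hp1e X hX, hp2e Y hY] at hW
  set W := ⁅H + (X + Y), lam • X + mu • Y⁆
  have hW_perp : B ⁅X, Y⁆ W = 0 := by
    rw [B.apply_lie_left_eq_of_invariant hBinv, ← lie_skew, map_neg, neg_eq_zero]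
    exact horth X hX _ (hp2h W hW Y hY)
  have hW_eq : B ⁅X, Y⁆ W = (mu - lam) * B ⁅X, Y⁆ ⁅X, Y⁆ := by
    have hHX := hbr X hX Y hY _ (Submodule.mem_sup_left (hp1h H hH X hX))
    have hHY := hbr X hX Y hY _ (Submodule.mem_sup_right (hp2h H hH Y hY))
    simp only [W, lie_add_add_smul_add_smul, map_add, map_smul, hHX, hHY, smul_eq_mul]
    ring
  have := (mul_eq_zero.mp (hW_eq ▸ hW_perp)).resolve_right (hBpos _ hXY).ne'
  linarith

/-- In a GO-space, if `p₁ ⊆ ker(A − λ)`, `p₂ ⊆ ker(A − μ)` are orthogonal `ad h`-invariant subspaces whose brackets are orthogonal to `p₁ + p₂`, and `[p₁, p₂] ≠ 0`, then `λ = μ`. -/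
theorem stmt_13
    {g : Type*} [LieRing g] [LieAlgebra ℝ g] [FiniteDimensional ℝ g]
    (B : g →ₗ[ℝ] g →ₗ[ℝ] ℝ)
    (hBsymm : ∀ X Y : g, B X Y = B Y X)
    (hBpos : ∀ X : g, X ≠ 0 → 0 < B X X)
    (hBinv : ∀ Z X Y : g, B ⁅Z, X⁆ Y + B X ⁅Z, Y⁆ = 0)
    (h : LieSubalgebra ℝ g)
    (m : Submodule ℝ g) (hm : ∀ X : g, X ∈ m ↔ ∀ H ∈ h, B X H = 0)
    (A : g →ₗ[ℝ] g)
    (hAm : ∀ X ∈ m, A X ∈ m)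
    (hAsymm : ∀ X ∈ m, ∀ Y ∈ m, B (A X) Y = B X (A Y))
    (hApos : ∀ X ∈ m, X ≠ 0 → 0 < B (A X) X)
    (hAequiv : ∀ H ∈ h, ∀ X ∈ m, A ⁅H, X⁆ = ⁅H, A X⁆)
    (hGO : ∀ X ∈ m, ∃ H ∈ h, ⁅H + X, A X⁆ ∈ h)
    (lam mu : ℝ)
    (p1 p2 : Submodule ℝ g) (hp1m : p1 ≤ m) (hp2m : p2 ≤ m)
    (hp1h : ∀ H ∈ h, ∀ X ∈ p1, ⁅H, X⁆ ∈ p1)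
    (hp2h : ∀ H ∈ h, ∀ Y ∈ p2, ⁅H, Y⁆ ∈ p2)
    (horth : ∀ X ∈ p1, ∀ Y ∈ p2, B X Y = 0)
    (hbr : ∀ X ∈ p1, ∀ Y ∈ p2, ∀ v ∈ p1 ⊔ p2, B ⁅X, Y⁆ v = 0)
    (hp1e : ∀ X ∈ p1, A X = lam • X)
    (hp2e : ∀ Y ∈ p2, A Y = mu • Y)
    (hne0 : ∃ X ∈ p1, ∃ Y ∈ p2, ⁅X, Y⁆ ≠ 0) :
    lam = mu :=
  stmt_13_general B hBpos hBinv h m A hGO lam mu p1 p2 hp1m hp2m hp1h hp2h horth hbr hp1e hp2e hne0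
end

section
/- Let n ≥ 3 and let R(B_n) = R_0 ⊔ R_1 ⊔ R_2 be a special decomposition such that −e_n ∈ R_1, e_{n−1} + e_n ∈ R_2 and e_{n−1} − e_n ∈ R_0. Let V' = {v ∈ ℝ^n : ⟨v, e_n⟩ = 0}, let R' = R(B_n) ∩ V' (a root system of type B_{n−1} in V'), and set R'_i = R_i ∩ V' for i = 0, 1, 2. Then R' = R'_0 ⊔ R'_1 ⊔ R'_2 is a special decomposition of R'; in particular R'_1 and R'_2 are nonempty (one has e_{n−1} ∈ R'_1, and at least one of ±e_{n−2} + e_{n−1} lies in R'_2). -/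
open scoped RealInnerProductSpace Pointwise

/-- The `i`-th standard basis vector of `ℝ^n`. -/
noncomputable def stdE (n : ℕ) (i : Fin n) : EuclideanSpace ℝ (Fin n) :=
  EuclideanSpace.single i 1

/-- The long roots `±(e_i − e_j)`, `i < j`, of the standard decomposition. -/
def stdR0 (n : ℕ) : Set (EuclideanSpace ℝ (Fin n)) :=
  {v | ∃ i j : Fin n, i < j ∧ (v = stdE n i - stdE n j ∨ v = -(stdE n i - stdE n j))}

/-- The short roots `±e_i` of `R(B_n)`. -/
def stdR1 (n : ℕ) : Set (EuclideanSpace ℝ (Fin n)) :=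
  {v | ∃ i : Fin n, v = stdE n i ∨ v = -stdE n i}

/-- The long roots `±(e_i + e_j)`, `i < j`, of the standard decomposition. -/
def stdR2 (n : ℕ) : Set (EuclideanSpace ℝ (Fin n)) :=
  {v | ∃ i j : Fin n, i < j ∧ (v = stdE n i + stdE n j ∨ v = -(stdE n i + stdE n j))}

/-- The root system of type `B_n`:  `{±e_i} ∪ {±e_i ± e_j : i < j}`. -/
def RB (n : ℕ) : Set (EuclideanSpace ℝ (Fin n)) := stdR0 n ∪ stdR1 n ∪ stdR2 n

/-- A *special decomposition* of a (finite, symmetric) set `R` of nonzero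
vectors of a Euclidean space is a partition `R = R₀ ⊔ R₁ ⊔ R₂` satisfying the
conditions (a)–(h) of Alekseevsky–Nikonorov:
(a) each part is symmetric; (b) `R₀` is closed; (c) some `α ∈ R₁`, `β ∈ R₂`
have `α + β ∈ R`; (d) every such pair spans a `B₂`-subsystem (8 roots);
(e) for such a pair with `‖α‖ ≠ ‖β‖`, writing `γ`/`δ` for the shorter/longer
root, `γ + δ` lies in the same part as `γ` and `2γ + δ ∈ R₀`; (f) for such a
pair with `‖α‖ = ‖β‖`, `α − β ∈ R` and exactly one of `α ± β` lies in `R₀`,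
the other in `R₁ ∪ R₂`; (g) if `α ∈ R₁`, `β ∈ R₂` are both long then
`α ± β ∉ R`; (h) adding an `R₀`-root keeps a root in its part. -/
def IsSpecialDecomposition {E : Type*} [NormedAddCommGroup E]
    [InnerProductSpace ℝ E] (R R0 R1 R2 : Set E) : Prop :=
  R = R0 ∪ R1 ∪ R2 ∧
  R0 ∩ R1 = ∅ ∧ R0 ∩ R2 = ∅ ∧ R1 ∩ R2 = ∅ ∧
  R0 = -R0 ∧ R1 = -R1 ∧ R2 = -R2 ∧
  (∀ α ∈ R0, ∀ β ∈ R0, α + β ∈ R → α + β ∈ R0) ∧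
  (∃ α ∈ R1, ∃ β ∈ R2, α + β ∈ R) ∧
  (∀ α ∈ R1, ∀ β ∈ R2, α + β ∈ R →
    (R ∩ (Submodule.span ℝ ({α, β} : Set E) : Set E)).ncard = 8) ∧
  (∀ α ∈ R1, ∀ β ∈ R2, α + β ∈ R →
    (‖α‖ < ‖β‖ → α + β ∈ R1 ∧ (2 : ℝ) • α + β ∈ R0) ∧
    (‖β‖ < ‖α‖ → α + β ∈ R2 ∧ α + (2 : ℝ) • β ∈ R0)) ∧
  (∀ α ∈ R1, ∀ β ∈ R2, α + β ∈ R → ‖α‖ = ‖β‖ →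
    α - β ∈ R ∧ ((α + β ∈ R0 ∧ α - β ∈ R1 ∪ R2) ∨
      (α - β ∈ R0 ∧ α + β ∈ R1 ∪ R2))) ∧
  (∀ α ∈ R1, ∀ β ∈ R2, (∀ δ ∈ R, ‖δ‖ ≤ ‖α‖) → (∀ δ ∈ R, ‖δ‖ ≤ ‖β‖) →
    α + β ∉ R ∧ α - β ∉ R) ∧
  (∀ δ ∈ R1 ∪ R2, ∀ η ∈ R0, δ + η ∈ R →
    (δ ∈ R1 → δ + η ∈ R1) ∧ (δ ∈ R2 → δ + η ∈ R2))

/-! Intersecting with a subspace `V` preserves every axiom of a special decomposition except the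
existence clause (c), provided (for (g)) that `V` contains a root that is long in all of `R`. In
`e_n^⊥` both come from locating a few roots: (e) for `-e_n` and `e_{n-1} + e_n` puts `e_{n-1}` in
`R₁`; `e_{n-2} + e_{n-1}` cannot lie in `R₁`, since translating by `e_n - e_{n-1} ∈ R₀` would put
`e_{n-2} + e_n` in `R₁`, and then (f) for `-(e_{n-2} + e_n)` and `e_{n-1} + e_n` would make
`-e_{n-2} - e_{n-1} - 2 e_n` a root; and if it lies in `R₀`, then (h) and (e) force
`e_{n-1} - e_{n-2} ∈ R₂`. -/

theorem neg_mem_of_eq_neg {α : Type*} [InvolutiveNeg α] {S : Set α} (hS : S = -S) {x : α}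
    (hx : x ∈ S) : -x ∈ S := by
  rw [hS, Set.neg_mem_neg]
  exact hx

namespace IsSpecialDecomposition

variable {E : Type*} [NormedAddCommGroup E] [InnerProductSpace ℝ E] {R R0 R1 R2 : Set E}
  {α β x : E}

theorem mem_zero_or_one_or_two (hdec : IsSpecialDecomposition R R0 R1 R2) (hx : x ∈ R) :
    x ∈ R0 ∨ x ∈ R1 ∨ x ∈ R2 := by
  rcases hdec.1 ▸ hx with (h | h) | h
  exacts [Or.inl h, Or.inr (Or.inl h), Or.inr (Or.inr h)]

theorem notMem_two_of_mem_zero (hdec : IsSpecialDecomposition R R0 R1 R2) (hx : x ∈ R0) :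
    x ∉ R2 := fun hx2 => Set.eq_empty_iff_forall_notMem.1 hdec.2.2.1 x ⟨hx, hx2⟩

theorem notMem_two_of_mem_one (hdec : IsSpecialDecomposition R R0 R1 R2) (hx : x ∈ R1) :
    x ∉ R2 := fun hx2 => Set.eq_empty_iff_forall_notMem.1 hdec.2.2.2.1 x ⟨hx, hx2⟩

theorem neg_mem_zero (hdec : IsSpecialDecomposition R R0 R1 R2) (hx : x ∈ R0) : -x ∈ R0 :=
  neg_mem_of_eq_neg hdec.2.2.2.2.1 hx

theorem neg_mem_one (hdec : IsSpecialDecomposition R R0 R1 R2) (hx : x ∈ R1) : -x ∈ R1 :=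
  neg_mem_of_eq_neg hdec.2.2.2.2.2.1 hx

theorem neg_mem_two (hdec : IsSpecialDecomposition R R0 R1 R2) (hx : x ∈ R2) : -x ∈ R2 :=
  neg_mem_of_eq_neg hdec.2.2.2.2.2.2.1 hx

theorem add_mem_one_of_mem_zero (hdec : IsSpecialDecomposition R R0 R1 R2) (hα : α ∈ R1)
    (hβ : β ∈ R0) (hx : x ∈ R) (hsum : α + β = x) : x ∈ R1 := by
  subst hsum
  exact (hdec.2.2.2.2.2.2.2.2.2.2.2.2.2 α (Or.inl hα) β hβ hx).1 hα

theorem add_mem_two_of_mem_zero (hdec : IsSpecialDecomposition R R0 R1 R2) (hα : α ∈ R2)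
    (hβ : β ∈ R0) (hx : x ∈ R) (hsum : α + β = x) : x ∈ R2 := by
  subst hsum
  exact (hdec.2.2.2.2.2.2.2.2.2.2.2.2.2 α (Or.inr hα) β hβ hx).2 hα

theorem add_mem_one_of_norm_lt (hdec : IsSpecialDecomposition R R0 R1 R2) (hα : α ∈ R1)
    (hβ : β ∈ R2) (hx : x ∈ R) (hsum : α + β = x) (hlt : ‖α‖ < ‖β‖) : x ∈ R1 := by
  subst hsum
  exact ((hdec.2.2.2.2.2.2.2.2.2.2.1 α hα β hβ hx).1 hlt).1

theorem two_smul_add_mem_zero_of_norm_lt (hdec : IsSpecialDecomposition R R0 R1 R2)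
    (hα : α ∈ R1) (hβ : β ∈ R2) (hx : α + β ∈ R) (hlt : ‖α‖ < ‖β‖) {y : E}
    (hy : (2 : ℝ) • α + β = y) : y ∈ R0 :=
  hy ▸ ((hdec.2.2.2.2.2.2.2.2.2.2.1 α hα β hβ hx).1 hlt).2

theorem sub_mem_of_norm_eq (hdec : IsSpecialDecomposition R R0 R1 R2) (hα : α ∈ R1)
    (hβ : β ∈ R2) (hx : α + β ∈ R) (hnorm : ‖α‖ = ‖β‖) : α - β ∈ R :=
  (hdec.2.2.2.2.2.2.2.2.2.2.2.1 α hα β hβ hx hnorm).1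

theorem inter_submodule (hdec : IsSpecialDecomposition R R0 R1 R2) (V : Submodule ℝ E)
    (hpair : ∃ α ∈ R1 ∩ V, ∃ β ∈ R2 ∩ V, α + β ∈ R)
    (hlong : ∃ γ ∈ R ∩ V, ∀ δ ∈ R, ‖δ‖ ≤ ‖γ‖) :
    IsSpecialDecomposition (R ∩ V) (R0 ∩ V) (R1 ∩ V) (R2 ∩ V) := by
  obtain ⟨hR, h01, h02, h12, hs0, hs1, hs2, hclosed, -, hd, he, hf, hg, hh⟩ := hdec
  have disjoint {S T : Set E} (hST : S ∩ T = ∅) : S ∩ V ∩ (T ∩ V) = ∅ := by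
    rw [← Set.inter_inter_distrib_right, hST, Set.empty_inter]
  have symm {S : Set E} (hS : S = -S) : S ∩ V = -(S ∩ V) := by
    rw [Set.inter_neg, ← hS, Submodule.neg_coe]
  refine ⟨by rw [hR, Set.union_inter_distrib_right, Set.union_inter_distrib_right],
    disjoint h01, disjoint h02, disjoint h12, symm hs0, symm hs1, symm hs2,
    ?_, ?_, ?_, ?_, ?_, ?_, ?_⟩
  · rintro α ⟨hα, -⟩ β ⟨hβ, -⟩ ⟨hαβ, hαβV⟩
    exact ⟨hclosed α hα β hβ hαβ, hαβV⟩
  · obtain ⟨α, hα, β, hβ, hαβ⟩ := hpair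
    exact ⟨α, hα, β, hβ, hαβ, add_mem hα.2 hβ.2⟩
  · rintro α ⟨hα, hαV⟩ β ⟨hβ, hβV⟩ ⟨hαβ, -⟩
    have hspan : (Submodule.span ℝ {α, β} : Set E) ⊆ V :=
      Submodule.span_le.2 (Set.pair_subset hαV hβV)
    rw [Set.inter_assoc, Set.inter_eq_right.2 hspan]
    exact hd α hα β hβ hαβ
  · rintro α ⟨hα, hαV⟩ β ⟨hβ, hβV⟩ ⟨hαβ, hαβV⟩
    obtain ⟨hlt, hgt⟩ := he α hα β hβ hαβ
    exact ⟨fun h => ⟨⟨(hlt h).1, hαβV⟩, (hlt h).2, add_mem (V.smul_mem 2 hαV) hβV⟩,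
      fun h => ⟨⟨(hgt h).1, hαβV⟩, (hgt h).2, add_mem hαV (V.smul_mem 2 hβV)⟩⟩
  · rintro α ⟨hα, hαV⟩ β ⟨hβ, hβV⟩ ⟨hαβ, hαβV⟩ hnorm
    have hsubV : α - β ∈ V := sub_mem hαV hβV
    obtain ⟨hsub, hcases⟩ := hf α hα β hβ hαβ hnorm
    refine ⟨⟨hsub, hsubV⟩, ?_⟩
    rcases hcases with ⟨h0, h12⟩ | ⟨h0, h12⟩
    · exact Or.inl ⟨⟨h0, hαβV⟩, h12.imp (⟨·, hsubV⟩) (⟨·, hsubV⟩)⟩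
    · exact Or.inr ⟨⟨h0, hsubV⟩, h12.imp (⟨·, hαβV⟩) (⟨·, hαβV⟩)⟩
  · obtain ⟨γ, hγ, hγlong⟩ := hlong
    rintro α ⟨hα, -⟩ β ⟨hβ, -⟩ hαlong hβlong
    obtain ⟨hadd, hsub⟩ := hg α hα β hβ (fun δ hδ => (hγlong δ hδ).trans (hαlong γ hγ))
      (fun δ hδ => (hγlong δ hδ).trans (hβlong γ hγ))
    exact ⟨fun h => hadd h.1, fun h => hsub h.1⟩
  · rintro δ hδ η ⟨hη, -⟩ ⟨hδη, hδηV⟩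
    obtain ⟨h1, h2⟩ := hh δ (hδ.imp And.left And.left) η hη hδη
    exact ⟨fun hδ1 => ⟨h1 hδ1.1, hδηV⟩, fun hδ2 => ⟨h2 hδ2.1, hδηV⟩⟩

end IsSpecialDecomposition

section RB

variable {n : ℕ} {i j k : Fin n}

theorem inner_stdE_stdE_of_ne (h : i ≠ j) : ⟪stdE n i, stdE n j⟫ = 0 := by
  simp [stdE, EuclideanSpace.inner_single_left, h.symm]

theorem norm_stdE (i : Fin n) : ‖stdE n i‖ = 1 := by
  simp [stdE]

theorem norm_stdE_add_stdE (h : i ≠ j) : ‖stdE n i + stdE n j‖ = √2 := by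
  rw [← Real.sqrt_sq (norm_nonneg _), norm_add_sq_real, inner_stdE_stdE_of_ne h, norm_stdE,
    norm_stdE]
  norm_num

theorem norm_stdE_sub_stdE (h : i ≠ j) : ‖stdE n i - stdE n j‖ = √2 := by
  rw [← Real.sqrt_sq (norm_nonneg _), norm_sub_sq_real, inner_stdE_stdE_of_ne h, norm_stdE,
    norm_stdE]
  norm_num

theorem stdE_mem_RB (i : Fin n) : stdE n i ∈ RB n :=
  Or.inl (Or.inr ⟨i, Or.inl rfl⟩)

theorem neg_stdE_mem_RB (i : Fin n) : -stdE n i ∈ RB n :=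
  Or.inl (Or.inr ⟨i, Or.inr rfl⟩)

theorem stdE_sub_stdE_mem_RB (h : i ≠ j) : stdE n i - stdE n j ∈ RB n := by
  rcases h.lt_or_gt with hij | hji
  · exact Or.inl (Or.inl ⟨i, j, hij, Or.inl rfl⟩)
  · exact Or.inl (Or.inl ⟨j, i, hji, Or.inr (neg_sub _ _).symm⟩)

theorem stdE_add_stdE_mem_RB (h : i ≠ j) : stdE n i + stdE n j ∈ RB n := by
  rcases h.lt_or_gt with hij | hji
  · exact Or.inr ⟨i, j, hij, Or.inl rfl⟩
  · exact Or.inr ⟨j, i, hji, Or.inl (add_comm _ _)⟩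

theorem norm_le_sqrt_two_of_mem_RB {v : EuclideanSpace ℝ (Fin n)} (hv : v ∈ RB n) :
    ‖v‖ ≤ √2 := by
  rcases hv with (⟨i, j, hij, rfl | rfl⟩ | ⟨i, rfl | rfl⟩) | ⟨i, j, hij, rfl | rfl⟩ <;>
    (try rw [norm_neg]) <;>
    first
    | exact (norm_stdE i).trans_le Real.one_lt_sqrt_two.le
    | exact (norm_stdE_sub_stdE hij.ne).le
    | exact (norm_stdE_add_stdE hij.ne).le

theorem notMem_RB_of_two_le_abs_apply {v : EuclideanSpace ℝ (Fin n)} (h : 2 ≤ |v i|) :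
    v ∉ RB n := by
  intro hv
  have hle : |v i| ≤ √2 := (PiLp.norm_apply_le v i).trans (norm_le_sqrt_two_of_mem_RB hv)
  have hsqrt : √2 < 2 := by
    rw [Real.sqrt_lt' two_pos]
    norm_num
  linarith

end RB

section InductionStep

variable {n : ℕ} {R0 R1 R2 : Set (EuclideanSpace ℝ (Fin n))} {i j k : Fin n}

theorem stdE_mem_one (hdec : IsSpecialDecomposition (RB n) R0 R1 R2) (hji : j ≠ i)
    (h1 : -stdE n i ∈ R1) (h2 : stdE n j + stdE n i ∈ R2) : stdE n j ∈ R1 := by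
  refine hdec.add_mem_one_of_norm_lt h1 h2 (stdE_mem_RB j) (by abel) ?_
  rw [norm_neg, norm_stdE, norm_stdE_add_stdE hji]
  exact Real.one_lt_sqrt_two

theorem stdE_add_stdE_notMem_one (hdec : IsSpecialDecomposition (RB n) R0 R1 R2)
    (hki : k ≠ i) (hji : j ≠ i) (hkj : k ≠ j)
    (h2 : stdE n j + stdE n i ∈ R2) (h0 : stdE n j - stdE n i ∈ R0) :
    stdE n k + stdE n j ∉ R1 := by
  intro hkj1
  have hki1 : stdE n k + stdE n i ∈ R1 :=
    hdec.add_mem_one_of_mem_zero hkj1 (hdec.neg_mem_zero h0) (stdE_add_stdE_mem_RB hki)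
      (by abel)
  have hsub : -(stdE n k + stdE n i) - (stdE n j + stdE n i) ∈ RB n := by
    refine hdec.sub_mem_of_norm_eq (hdec.neg_mem_one hki1) h2 ?_ ?_
    · convert stdE_sub_stdE_mem_RB hkj.symm using 1
      abel
    · rw [norm_neg, norm_stdE_add_stdE hki, norm_stdE_add_stdE hji]
  -- its `i`-th coordinate is `-2`
  refine notMem_RB_of_two_le_abs_apply (i := i) ?_ hsub
  norm_num [stdE, hki.symm, hji.symm]

theorem neg_stdE_add_stdE_mem_two_of_mem_zero (hdec : IsSpecialDecomposition (RB n) R0 R1 R2)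
    (hki : k ≠ i) (hkj : k ≠ j) (h1 : -stdE n i ∈ R1) (h2 : stdE n j + stdE n i ∈ R2)
    (h0 : stdE n j - stdE n i ∈ R0) (hkj0 : stdE n k + stdE n j ∈ R0) :
    -stdE n k + stdE n j ∈ R2 := by
  have hik2 : stdE n i - stdE n k ∈ R2 :=
    hdec.add_mem_two_of_mem_zero h2 (hdec.neg_mem_zero hkj0) (stdE_sub_stdE_mem_RB hki.symm)
      (by abel)
  have hki0 : stdE n k + stdE n i ∈ R0 := by
    have hlt : ‖-stdE n i‖ < ‖stdE n i - stdE n k‖ := by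
      rw [norm_neg, norm_stdE, norm_stdE_sub_stdE hki.symm]
      exact Real.one_lt_sqrt_two
    have hsum : -stdE n i + (stdE n i - stdE n k) ∈ RB n := by
      convert neg_stdE_mem_RB k using 1
      abel
    have hneg : -(stdE n k + stdE n i) ∈ R0 :=
      hdec.two_smul_add_mem_zero_of_norm_lt h1 hik2 hsum hlt (by module)
    simpa using hdec.neg_mem_zero hneg
  rcases hdec.mem_zero_or_one_or_two (stdE_sub_stdE_mem_RB hkj) with hkj0' | hkj1 | hkj2
  · exact absurd (hdec.add_mem_two_of_mem_zero h2 hkj0' (stdE_add_stdE_mem_RB hki) (by abel))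
      (hdec.notMem_two_of_mem_zero hki0)
  · have hki1 : stdE n k - stdE n i ∈ R1 :=
      hdec.add_mem_one_of_mem_zero hkj1 h0 (stdE_sub_stdE_mem_RB hki) (by abel)
    exact absurd (neg_sub (stdE n i) (stdE n k) ▸ hdec.neg_mem_two hik2)
      (hdec.notMem_two_of_mem_one hki1)
  · rw [neg_add_eq_sub, ← neg_sub]
    exact hdec.neg_mem_two hkj2

theorem stdE_add_stdE_mem_two_or_neg (hdec : IsSpecialDecomposition (RB n) R0 R1 R2)
    (hki : k ≠ i) (hji : j ≠ i) (hkj : k ≠ j) (h1 : -stdE n i ∈ R1)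
    (h2 : stdE n j + stdE n i ∈ R2) (h0 : stdE n j - stdE n i ∈ R0) :
    stdE n k + stdE n j ∈ R2 ∨ -stdE n k + stdE n j ∈ R2 := by
  rcases hdec.mem_zero_or_one_or_two (stdE_add_stdE_mem_RB hkj) with h | h | h
  · exact Or.inr (neg_stdE_add_stdE_mem_two_of_mem_zero hdec hki hkj h1 h2 h0 h)
  · exact absurd h (stdE_add_stdE_notMem_one hdec hki hji hkj h2 h0)
  · exact Or.inl h

end InductionStep

/-- (Induction step of the classification.)  If `n ≥ 3` and
`R(B_n) = R₀ ⊔ R₁ ⊔ R₂` is a special decomposition with `−e_n ∈ R₁`,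
`e_{n−1} + e_n ∈ R₂` and `e_{n−1} − e_n ∈ R₀`, then the decomposition induced
on `R' = R(B_n) ∩ V'`, where `V' = e_n^⊥` (a root system of type `B_{n−1}`),
is again special; in particular `e_{n−1} ∈ R₁ ∩ V'` and at least one of
`±e_{n−2} + e_{n−1}` lies in `R₂ ∩ V'`. -/
theorem stmt_18 (n : ℕ) (hn : 3 ≤ n)
    (R0 R1 R2 : Set (EuclideanSpace ℝ (Fin n)))
    (hdec : IsSpecialDecomposition (RB n) R0 R1 R2)
    (h1 : -stdE n ⟨n - 1, by omega⟩ ∈ R1)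
    (h2 : stdE n ⟨n - 2, by omega⟩ + stdE n ⟨n - 1, by omega⟩ ∈ R2)
    (h0 : stdE n ⟨n - 2, by omega⟩ - stdE n ⟨n - 1, by omega⟩ ∈ R0)
    (V' : Set (EuclideanSpace ℝ (Fin n)))
    (hV' : V' = {v | inner ℝ v (stdE n ⟨n - 1, by omega⟩) = (0 : ℝ)}) :
    IsSpecialDecomposition (RB n ∩ V') (R0 ∩ V') (R1 ∩ V') (R2 ∩ V') ∧
      stdE n ⟨n - 2, by omega⟩ ∈ R1 ∩ V' ∧
      (stdE n ⟨n - 3, by omega⟩ + stdE n ⟨n - 2, by omega⟩ ∈ R2 ∩ V' ∨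
        -stdE n ⟨n - 3, by omega⟩ + stdE n ⟨n - 2, by omega⟩ ∈ R2 ∩ V') := by
  set i : Fin n := ⟨n - 1, by omega⟩
  set j : Fin n := ⟨n - 2, by omega⟩
  set k : Fin n := ⟨n - 3, by omega⟩
  have hji : j ≠ i := by simp only [ne_eq, Fin.ext_iff, i, j]; omega
  have hki : k ≠ i := by simp only [ne_eq, Fin.ext_iff, i, k]; omega
  have hkj : k ≠ j := by simp only [ne_eq, Fin.ext_iff, j, k]; omega
  set V := (ℝ ∙ stdE n i)ᗮ
  have hV : V' = V := by
    ext v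
    rw [hV', Set.mem_ofPred_eq, SetLike.mem_coe, Submodule.mem_orthogonal_singleton_iff_inner_left]
  have stdE_mem_V {l : Fin n} (hl : l ≠ i) : stdE n l ∈ V :=
    Submodule.mem_orthogonal_singleton_iff_inner_left.2 (inner_stdE_stdE_of_ne hl)
  have hj1 := stdE_mem_one hdec hji h1 h2
  have hkj2 := stdE_add_stdE_mem_two_or_neg hdec hki hji hkj h1 h2 h0
  have hkjV : stdE n k + stdE n j ∈ V := add_mem (stdE_mem_V hki) (stdE_mem_V hji)
  have hkjV' : -stdE n k + stdE n j ∈ V := add_mem (neg_mem (stdE_mem_V hki)) (stdE_mem_V hji)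
  subst hV
  refine ⟨hdec.inter_submodule V ?_ ?_, ⟨hj1, stdE_mem_V hji⟩, hkj2.imp (⟨·, hkjV⟩) (⟨·, hkjV'⟩)⟩
  · have hj1' : -stdE n j ∈ R1 ∩ V := ⟨hdec.neg_mem_one hj1, neg_mem (stdE_mem_V hji)⟩
    rcases hkj2 with h | h
    · exact ⟨_, hj1', _, ⟨h, hkjV⟩, by simpa using stdE_mem_RB k⟩
    · exact ⟨_, hj1', _, ⟨h, hkjV'⟩, by simpa using neg_stdE_mem_RB k⟩
  · refine ⟨_, ⟨stdE_add_stdE_mem_RB hkj, hkjV⟩, fun δ hδ => ?_⟩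
    rw [norm_stdE_add_stdE hkj]
    exact norm_le_sqrt_two_of_mem_RB hδ
end
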